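/- Let n ≥ 1 and k ∈ {1,…,n}. Let σ_k : {1,…,n} → {1,…,n+1} be given by σ_k(i) = i for i ≤ k and σ_k(i) = i+1 for i ≥ k+1, and let Σ_k : ℝ^{2^n} → ℝ^{2^{n+1}} be the injective linear map defined by (Σ_k a)_{σ_k(S)} = a_S for every S ⊆ {1,…,n} and (Σ_k a)_T = 0 for every T ⊆ {1,…,n+1} not of the form σ_k(S). Then Σ_k(K_{n+1}) is a face of K_{n+2}: Σ_k(K_{n+1}) ⊆ K_{n+2}, and whenever x, y ∈ K_{n+2} satisfy x + y ∈ Σ_k(K_{n+1}), both x and y lie in Σ_k(K_{n+1}). Consequently, a ∈ K_{n+1} if and only if Σ_k(a) ∈ K_{n+2}, and a is an extreme ray of K_{n+1} if and only if Σ_k(a) is an extreme ray of K_{n+2}. -/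

import Mathlib

/-- A graded poset: a finite poset with a least element `bot`, a greatest element `top`,
and a rank function that is `0` at `bot` and increases by one along covering relations. -/
structure GradedPoset where
  carrier : Type
  [fintypeCarrier : Fintype carrier]
  [partialOrderCarrier : PartialOrder carrier]
  bot : carrier
  top : carrier
  bot_le : ∀ x : carrier, bot ≤ x
  le_top : ∀ x : carrier, x ≤ top
  rank : carrier → ℕ
  rank_bot : rank bot = 0
  rank_covBy : ∀ x y : carrier, x ⋖ y → rank y = rank x + 1

attribute [instance] GradedPoset.fintypeCarrier GradedPoset.partialOrderCarrier

/-- The flag number `f_S(P)`: the number of chains in `P` whose set of ranks is `S`. -/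
noncomputable def flagNum (P : GradedPoset) (S : Finset ℕ) : ℕ :=
  Set.ncard {c : Finset P.carrier |
    IsChain (· ≤ ·) (↑c : Set P.carrier) ∧ c.image P.rank = S}

/-- The cone `K_r` of all linear inequalities valid on flag `f`-vectors of graded posets
of rank `r`, modelled inside `Finset ℕ → ℝ` as the functions supported on subsets of
`{1,…,r-1}` whose associated functional is nonnegative on all graded posets of rank `r`. -/
def coneK (r : ℕ) : Set (Finset ℕ → ℝ) :=
  {a | (∀ S : Finset ℕ, ¬ S ⊆ Finset.Icc 1 (r - 1) → a S = 0) ∧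
    ∀ P : GradedPoset, P.rank P.top = r →
      0 ≤ ∑ S ∈ (Finset.Icc 1 (r - 1)).powerset, a S * (flagNum P S : ℝ)}

/-- The vector `e_∅` with coordinate `1` at `∅` and `0` elsewhere
(corresponding to the chain operator `f_∅`). -/
noncomputable def eEmpty : Finset ℕ → ℝ := fun S => if S = ∅ then 1 else 0

/-- `F` is an extreme ray of the cone `K`: `F` is a nonzero element of `K` such that
whenever `F = G + H` with `G, H ∈ K`, both `G` and `H` are nonnegative multiples of `F`. -/
def IsExtremeRay (K : Set (Finset ℕ → ℝ)) (F : Finset ℕ → ℝ) : Prop :=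
  F ∈ K ∧ F ≠ 0 ∧
    ∀ G H : Finset ℕ → ℝ, G ∈ K → H ∈ K → F = G + H →
      (∃ c : ℝ, 0 ≤ c ∧ G = c • F) ∧ ∃ c : ℝ, 0 ≤ c ∧ H = c • F

/-- The lifting map `Σ_k : ℝ^{2^n} → ℝ^{2^{n+1}}` induced by the shift
`σ_k(i) = i` for `i ≤ k`, `σ_k(i) = i + 1` for `i ≥ k + 1`:
`(Σ_k a)_{σ_k(S)} = a_S` for `S ⊆ {1,…,n}` and `(Σ_k a)_T = 0` for `T` not of the
form `σ_k(S)` (i.e. `T ⊄ {1,…,n+1}` or `k + 1 ∈ T`). -/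
noncomputable def lift (n k : ℕ) (a : Finset ℕ → ℝ) : Finset ℕ → ℝ := fun T =>
  if T ⊆ Finset.Icc 1 (n + 1) ∧ k + 1 ∉ T then
    a (T.image (fun i => if i ≤ k then i else i - 1))
  else 0

/-! Deleting the level of rank `k + 1` from a poset of rank `n + 2`, or inserting above the
level of rank `k` of a poset of rank `n + 1` a new level (one new element just above each
element of rank `k`), reindexes flag numbers along `σ_k`. Hence `Σ_k a` is a valid inequality
exactly when `a` is, and every valid inequality whose coefficients vanish on the sets
containing `k + 1` comes from `K_{n+1}`.

Replacing each element of rank `k + 1` by `m + 1` incomparable copies multiplies `f_T` by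
`m + 1` when `k + 1 ∈ T` and leaves it unchanged otherwise; letting `m → ∞` shows that the part
of a valid inequality supported on the sets containing `k + 1` is again valid. If `x + y` lies
in `Σ_k(K_{n+1})`, these parts of `x` and `y` are valid and sum to zero, so both vanish on all
flag `f`-vectors. Flag `f`-vectors span, since the chains with the levels in `S` doubled have
`f_T = 2 ^ #(T ∩ S)`, an invertible matrix; so these parts are zero and `x, y ∈ Σ_k(K_{n+1})`.
The statement on extreme rays holds for any face that is an injective linear image. -/

open Finset

section Inversion

variable {α : Type*}

theorem Finset.eq_zero_of_forall_sum_filter_le_eq_zero {β : Type*} [PartialOrder α]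
    [DecidableLE α] [AddCommMonoid β] {s : Finset α} {g : α → β}
    (h : ∀ x ∈ s, ∑ y ∈ s with y ≤ x, g y = 0) : ∀ x ∈ s, g x = 0 := by
  classical
  by_contra! hne
  obtain ⟨x, hx⟩ := (s.filter (g · ≠ 0)).exists_minimal (by simpa [Finset.Nonempty] using hne)
  obtain ⟨hxs, hgx⟩ := mem_filter.1 hx.prop
  have hsum : ∑ y ∈ s with y ≤ x, g y = g x := by
    refine sum_eq_single_of_mem x (mem_filter.2 ⟨hxs, le_rfl⟩) fun y hy hyx => ?_
    rw [mem_filter] at hy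
    by_contra hgy
    exact hyx (hx.eq_of_le (mem_filter.2 ⟨hy.1, hgy⟩) hy.2)
  exact hgx (hsum ▸ h x hxs)

/-- Since `2 ^ #(T ∩ S)` counts the common subsets of `S` and `T`, the matrix
`(2 ^ #(T ∩ S))_{S, T ⊆ M}` is the product of the zeta matrices of the Boolean lattice and of
its dual, both unitriangular. -/
theorem eq_zero_of_forall_sum_mul_two_pow_card_inter_eq_zero [DecidableEq α] {R : Type*}
    [Semiring R] {M : Finset α} {z : Finset α → R}
    (h : ∀ S ⊆ M, ∑ T ∈ M.powerset, z T * 2 ^ #(T ∩ S) = 0) : ∀ T ⊆ M, z T = 0 := by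
  set g : Finset α → R := fun U => ∑ T ∈ M.powerset with U ⊆ T, z T
  have hg (S : Finset α) (hS : S ⊆ M) : ∑ U ∈ M.powerset with U ⊆ S, g U = 0 := by
    rw [← h S hS, sum_comm' (t' := M.powerset) (s' := fun T => (T ∩ S).powerset)]
    · refine sum_congr rfl fun T _ => ?_
      rw [sum_const, card_powerset, nsmul_eq_mul']
      push_cast
      rfl
    · intro U T
      simp only [mem_filter, mem_powerset, subset_inter_iff]
      constructor
      · rintro ⟨⟨-, hUS⟩, hTM, hUT⟩
        exact ⟨⟨hUT, hUS⟩, hTM⟩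
      · rintro ⟨⟨hUT, hUS⟩, hTM⟩
        exact ⟨⟨hUS.trans hS, hUS⟩, hTM, hUT⟩
  have hg0 := eq_zero_of_forall_sum_filter_le_eq_zero fun S hS => hg S (mem_powerset.1 hS)
  have hz := eq_zero_of_forall_sum_filter_le_eq_zero (α := (Finset α)ᵒᵈ) (s := M.powerset)
    (g := z) fun U hU => hg0 U hU
  exact fun T hT => hz T (mem_powerset.2 hT)

end Inversion

@[reducible]
def PartialOrder.strictComap {α β : Type*} [Preorder β] (f : α → β) : PartialOrder α where
  le a b := f a < f b ∨ a = b
  le_refl _ := Or.inr rfl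
  le_trans a b c := by
    rintro (hab | rfl) (hbc | rfl)
    exacts [Or.inl (hab.trans hbc), Or.inl hab, Or.inl hbc, Or.inr rfl]
  le_antisymm a b := by
    rintro (hab | rfl) (hba | hba)
    exacts [absurd (hab.trans hba) (lt_irrefl _), hba.symm, rfl, rfl]

theorem PartialOrder.strictComap_lt_iff {α β : Type*} [Preorder β] (f : α → β) {a b : α} :
    (PartialOrder.strictComap f).lt a b ↔ f a < f b := by
  change (f a < f b ∨ a = b) ∧ ¬(f b < f a ∨ b = a) ↔ f a < f b
  constructor
  · rintro ⟨hab | rfl, hba⟩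
    exacts [hab, absurd (Or.inr rfl) hba]
  · rintro hab
    refine ⟨Or.inl hab, ?_⟩
    rintro (hba | rfl)
    exacts [lt_asymm hab hba, lt_irrefl _ hab]

section Shift

/-- `σ_k`, the increasing bijection from `ℕ` onto `ℕ \ {k + 1}`. -/
def shiftAbove (k i : ℕ) : ℕ := if i ≤ k then i else i + 1

/-- The left inverse of `σ_k` used in `lift`. -/
def unshiftAbove (k i : ℕ) : ℕ := if i ≤ k then i else i - 1

variable {k i : ℕ}

theorem unshiftAbove_shiftAbove : unshiftAbove k (shiftAbove k i) = i := by
  unfold shiftAbove unshiftAbove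
  split_ifs <;> omega

theorem shiftAbove_unshiftAbove (h : i ≠ k + 1) : shiftAbove k (unshiftAbove k i) = i := by
  unfold shiftAbove unshiftAbove
  split_ifs <;> omega

theorem shiftAbove_ne : shiftAbove k i ≠ k + 1 := by
  unfold shiftAbove
  split_ifs <;> omega

theorem shiftAbove_injective : Function.Injective (shiftAbove k) :=
  Function.LeftInverse.injective fun _ => unshiftAbove_shiftAbove

theorem shiftAbove_add_one (h : i ≠ k) : shiftAbove k (i + 1) = shiftAbove k i + 1 := by
  unfold shiftAbove
  split_ifs <;> omega

end Shift

namespace GradedPoset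

variable (P : GradedPoset)

theorem rank_strictMono : StrictMono P.rank := by
  intro x y hxy
  induction x using WellFoundedGT.induction with
  | _ x ih =>
    obtain ⟨z, hxz, hzy⟩ := exists_covBy_le_of_lt hxy
    have hz := P.rank_covBy x z hxz
    rcases hzy.eq_or_lt with rfl | hzy
    · omega
    · have := ih z hxz.lt hzy
      omega

theorem exists_rank_eq_of_lt {x y : P.carrier} (hxy : x < y) {t : ℕ} (hxt : P.rank x < t)
    (hty : t < P.rank y) : ∃ z, x < z ∧ z < y ∧ P.rank z = t := by
  induction x using WellFoundedGT.induction with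
  | _ x ih =>
    obtain ⟨z, hxz, hzy⟩ := exists_covBy_le_of_lt hxy
    have hz := P.rank_covBy x z hxz
    have hzy : z < y := hzy.lt_of_ne (by rintro rfl; omega)
    rcases (show P.rank z = t ∨ P.rank z < t by omega) with hzt | hzt
    · exact ⟨z, hxz.lt, hzy, hzt⟩
    · obtain ⟨w, hzw, hwy, hw⟩ := ih z hxz.lt hzy hzt
      exact ⟨w, hxz.lt.trans hzw, hwy, hw⟩

theorem rank_injOn_of_isChain {c : Set P.carrier} (hc : IsChain (· ≤ ·) c) :
    Set.InjOn P.rank c := by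
  intro x hx y hy hxy
  by_contra hne
  rcases hc hx hy hne with h | h
  · exact (P.rank_strictMono (h.lt_of_ne hne)).ne hxy
  · exact (P.rank_strictMono (h.lt_of_ne' hne)).ne' hxy

noncomputable def flags (S : Finset ℕ) : Finset (Finset P.carrier) := by
  classical
  exact {c | IsChain (· ≤ ·) (c : Set P.carrier) ∧ c.image P.rank = S}

variable {P}

theorem mem_flags {S : Finset ℕ} {c : Finset P.carrier} :
    c ∈ P.flags S ↔ IsChain (· ≤ ·) (c : Set P.carrier) ∧ c.image P.rank = S := by
  simp [flags]

theorem flagNum_eq_card_flags (S : Finset ℕ) : flagNum P S = #(P.flags S) := by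
  rw [flagNum, ← Set.ncard_coe_finset]
  congr 1
  ext c
  simp [mem_flags]

theorem card_flags_filter_subset_range {Q : GradedPoset} (F : P.carrier ↪o Q.carrier)
    [DecidablePred fun c : Finset Q.carrier => ∀ y ∈ c, y ∈ Set.range F] {σ : ℕ → ℕ}
    (hσ : σ.Injective) (hrank : ∀ x, Q.rank (F x) = σ (P.rank x)) (S : Finset ℕ) :
    #({c ∈ Q.flags (S.image σ) | ∀ y ∈ c, y ∈ Set.range F}) = flagNum P S := by
  classical
  have himage (c : Finset P.carrier) :
      (c.map F.toEmbedding).image Q.rank = (c.image P.rank).image σ := by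
    simp only [map_eq_image, image_image]
    exact image_congr fun x _ => hrank x
  rw [flagNum_eq_card_flags]
  symm
  refine card_bij (fun c _ => c.map F.toEmbedding) (fun c hc => ?_)
    (fun c _ c' _ h => map_injective _ h) (fun c' hc' => ?_)
  · obtain ⟨hchain, hranks⟩ := mem_flags.1 hc
    refine mem_filter.2 ⟨mem_flags.2 ⟨?_, by rw [himage, hranks]⟩, fun y hy => ?_⟩
    · rw [coe_map]
      exact hchain.image F
    · obtain ⟨x, -, rfl⟩ := mem_map.1 hy
      exact Set.mem_range_self x
  · obtain ⟨hc', hrange⟩ := mem_filter.1 hc'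
    obtain ⟨hchain, hranks⟩ := mem_flags.1 hc'
    obtain ⟨c, -, rfl⟩ := (subset_map_iff (f := F.toEmbedding) (t := univ)).1
      fun y hy => by simpa using hrange y hy
    refine ⟨c, mem_flags.2 ⟨fun x hx y hy hxy => ?_, image_injective hσ ?_⟩, rfl⟩
    · rw [coe_map] at hchain
      simpa using hchain (Set.mem_image_of_mem F hx) (Set.mem_image_of_mem F hy)
        (F.injective.ne hxy)
    · rw [← himage, hranks]

theorem flagNum_image_eq {Q : GradedPoset} (F : P.carrier ↪o Q.carrier) {σ : ℕ → ℕ}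
    (hσ : σ.Injective) (hrank : ∀ x, Q.rank (F x) = σ (P.rank x)) {S : Finset ℕ}
    (hrange : ∀ y, Q.rank y ∈ S.image σ → y ∈ Set.range F) :
    flagNum Q (S.image σ) = flagNum P S := by
  classical
  rw [← card_flags_filter_subset_range F hσ hrank, flagNum_eq_card_flags, filter_true_of_mem]
  intro c hc y hy
  exact hrange y ((mem_flags.1 hc).2 ▸ mem_image_of_mem _ hy)

abbrev chain (r : ℕ) : GradedPoset where
  carrier := Fin (r + 1)
  bot := 0
  top := Fin.last r
  bot_le := Fin.zero_le
  le_top := Fin.le_last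
  rank := Fin.val
  rank_bot := rfl
  rank_covBy _ _ h := (Nat.covBy_iff_add_one_eq.1 (Fin.covBy_iff.1 h)).symm

theorem flagNum_chain {r : ℕ} {T : Finset ℕ} (hT : ∀ t ∈ T, t ≤ r) :
    flagNum (chain r) T = 1 := by
  classical
  rw [flagNum_eq_card_flags, card_eq_one]
  refine ⟨univ.filter fun x : Fin (r + 1) => (x : ℕ) ∈ T,
    eq_singleton_iff_unique_mem.2 ⟨mem_flags.2 ⟨isChain_of_trichotomous _, ?_⟩, fun c hc => ?_⟩⟩
  · ext t
    simp only [mem_image, mem_filter, mem_univ, true_and]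
    exact ⟨fun ⟨x, hx, hxt⟩ => hxt ▸ hx, fun ht => ⟨⟨t, Nat.lt_succ_of_le (hT t ht)⟩, ht, rfl⟩⟩
  · ext x
    rw [mem_filter, ← (mem_flags.1 hc).2]
    simp only [mem_univ, true_and]
    exact Fin.val_injective.mem_finset_image.symm

variable (P) in
def InflateCarrier (t m : ℕ) : Type :=
  {p : P.carrier × Fin (m + 1) // P.rank p.1 = t ∨ p.2 = 0}

namespace InflateCarrier

variable {t m : ℕ}

noncomputable instance : Fintype (InflateCarrier P t m) := by
  unfold InflateCarrier
  exact Fintype.ofFinite _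

instance : PartialOrder (InflateCarrier P t m) :=
  PartialOrder.strictComap fun p : InflateCarrier P t m => p.1.1

theorem lt_iff {p q : InflateCarrier P t m} : p < q ↔ p.1.1 < q.1.1 :=
  PartialOrder.strictComap_lt_iff _

variable (P) in
def copy (j : Fin (m + 1)) (x : P.carrier) : InflateCarrier P t m :=
  ⟨(x, if P.rank x = t then j else 0), by by_cases h : P.rank x = t <;> simp [h]⟩

theorem copy_of_rank_ne (j : Fin (m + 1)) {p : InflateCarrier P t m} (h : P.rank p.1.1 ≠ t) :
    copy P j p.1.1 = p :=
  Subtype.ext (Prod.ext rfl (by simp [copy, h, p.2.resolve_left h]))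

theorem copy_of_rank_eq {p : InflateCarrier P t m} (h : P.rank p.1.1 = t) :
    copy P p.1.2 p.1.1 = p :=
  Subtype.ext (Prod.ext rfl (by simp [copy, h]))

theorem copy_snd_of_rank_eq (j : Fin (m + 1)) {x : P.carrier} (h : P.rank x = t) :
    (copy P (t := t) j x).1.2 = j := by
  simp [copy, h]

end InflateCarrier

open InflateCarrier in
/-- `P` with each element of rank `t` replaced by an antichain of `m + 1` copies of it. -/
noncomputable def inflate (t m : ℕ) (h0 : t ≠ 0) (htop : P.rank P.top ≠ t) : GradedPoset where
  carrier := InflateCarrier P t m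
  bot := copy P 0 P.bot
  top := copy P 0 P.top
  bot_le q := by
    rcases (P.bot_le q.1.1).eq_or_lt with h | h
    · exact Or.inr (h ▸ copy_of_rank_ne 0 (h ▸ P.rank_bot ▸ h0.symm))
    · exact Or.inl h
  le_top q := by
    rcases (P.le_top q.1.1).eq_or_lt with h | h
    · exact Or.inr (h ▸ copy_of_rank_ne 0 (h ▸ htop)).symm
    · exact Or.inl h
  rank q := P.rank q.1.1
  rank_bot := P.rank_bot
  rank_covBy p q h := P.rank_covBy _ _
    ⟨lt_iff.1 h.lt, fun z hpz hzq => h.2 (c := copy P 0 z) (lt_iff.2 hpz) (lt_iff.2 hzq)⟩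

section inflate

variable {t m : ℕ} {h0 : t ≠ 0} {htop : P.rank P.top ≠ t}

open InflateCarrier

variable (h0 htop) in
noncomputable def copyEmbedding (j : Fin (m + 1)) :
    P.carrier ↪o (P.inflate t m h0 htop).carrier :=
  OrderEmbedding.ofMapLEIff (copy P j) fun x y => by
    change _ ∨ _ ↔ _
    rw [le_iff_lt_or_eq]
    refine or_congr Iff.rfl ⟨fun h => congrArg (fun p : InflateCarrier P t m => p.1.1) h, ?_⟩
    rintro rfl
    rfl

@[simp]
theorem rank_inflate (q : (P.inflate t m h0 htop).carrier) :
    (P.inflate t m h0 htop).rank q = P.rank q.1.1 := rfl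

theorem flagNum_inflate_of_notMem {T : Finset ℕ} (hT : t ∉ T) :
    flagNum (P.inflate t m h0 htop) T = flagNum P T := by
  simpa using flagNum_image_eq (copyEmbedding h0 htop 0) (σ := id) Function.injective_id
    (fun _ => rfl) fun y hy => ⟨y.1.1, copy_of_rank_ne 0 fun h => hT (h ▸ by simpa using hy)⟩

theorem flagNum_inflate_of_mem {T : Finset ℕ} (hT : t ∈ T) :
    flagNum (P.inflate t m h0 htop) T = (m + 1) * flagNum P T := by
  classical
  let inCopy (j : Fin (m + 1)) : Finset (Finset (P.inflate t m h0 htop).carrier) :=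
    {c ∈ (P.inflate t m h0 htop).flags T | ∀ y ∈ c, y ∈ Set.range (copyEmbedding h0 htop j)}
  have hcard (j : Fin (m + 1)) : #(inCopy j) = flagNum P T := by
    have := card_flags_filter_subset_range (copyEmbedding h0 htop j) (σ := id)
      Function.injective_id (fun _ => rfl) T
    rwa [image_id] at this
  have hpivot {c} (hc : c ∈ (P.inflate t m h0 htop).flags T) : ∃ q ∈ c, P.rank q.1.1 = t :=
    mem_image.1 ((mem_flags.1 hc).2 ▸ hT)
  -- A flag of type `T` lies in the copy indexed by its unique element of rank `t`.
  have hcover : (P.inflate t m h0 htop).flags T = univ.biUnion inCopy := by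
    ext c
    simp only [inCopy, mem_biUnion, mem_univ, true_and, mem_filter]
    refine ⟨fun hc => ?_, fun ⟨_, hc, _⟩ => hc⟩
    obtain ⟨q, hqc, hq⟩ := hpivot hc
    refine ⟨q.1.2, hc, fun y hy => ?_⟩
    by_cases hy' : P.rank y.1.1 = t
    · obtain rfl : y = q :=
        rank_injOn_of_isChain _ (mem_flags.1 hc).1 hy hqc (hy'.trans hq.symm)
      exact ⟨y.1.1, copy_of_rank_eq hy'⟩
    · exact ⟨y.1.1, copy_of_rank_ne _ hy'⟩
  have hdisj : Set.PairwiseDisjoint ↑(univ : Finset (Fin (m + 1))) inCopy := by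
    intro i _ j _ hij
    refine disjoint_left.2 fun c hci hcj => hij ?_
    obtain ⟨hc, hci⟩ := mem_filter.1 hci
    obtain ⟨q, hqc, hq⟩ := hpivot hc
    obtain ⟨x, rfl⟩ := hci q hqc
    obtain ⟨y, hy⟩ := (mem_filter.1 hcj).2 _ hqc
    obtain rfl : y = x := congrArg (fun p : InflateCarrier P t m => p.1.1) hy
    rw [← copy_snd_of_rank_eq i hq, ← copy_snd_of_rank_eq j hq]
    exact congrArg (fun p : InflateCarrier P t m => p.1.2) hy.symm
  rw [flagNum_eq_card_flags, hcover, card_biUnion hdisj]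
  simp only [hcard, sum_const, card_univ, Fintype.card_fin, smul_eq_mul]

end inflate

variable (P) in
def deleteLevel (k : ℕ) (htop : P.rank P.top ≠ k + 1) : GradedPoset where
  carrier := {x : P.carrier // P.rank x ≠ k + 1}
  bot := ⟨P.bot, by simp [P.rank_bot]⟩
  top := ⟨P.top, htop⟩
  bot_le x := P.bot_le x.1
  le_top x := P.le_top x.1
  rank x := unshiftAbove k (P.rank x.1)
  rank_bot := by simp [P.rank_bot, unshiftAbove]
  rank_covBy x y hxy := by
    have hx := x.2
    have hy := y.2
    have hlt : P.rank x < P.rank y := P.rank_strictMono hxy.lt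
    have : P.rank y = P.rank x + 1 ∨ P.rank x = k ∧ P.rank y = k + 2 := by
      by_contra! h
      obtain ⟨z, hxz, hzy, hz⟩ := P.exists_rank_eq_of_lt (x := x.1) (y := y.1) hxy.lt
        (t := if P.rank x = k then k + 2 else P.rank x + 1) (by split_ifs <;> omega)
        (by split_ifs <;> omega)
      exact hxy.2 (c := ⟨z, by split_ifs at hz <;> omega⟩) hxz hzy
    unfold unshiftAbove
    split_ifs <;> omega

section deleteLevel

variable {k : ℕ} {htop : P.rank P.top ≠ k + 1}

theorem rank_deleteLevel_top (h : k + 1 < P.rank P.top) :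
    (P.deleteLevel k htop).rank (P.deleteLevel k htop).top = P.rank P.top - 1 := by
  change unshiftAbove k (P.rank P.top) = _
  unfold unshiftAbove
  split_ifs <;> omega

theorem flagNum_deleteLevel (S : Finset ℕ) :
    flagNum P (S.image (shiftAbove k)) = flagNum (P.deleteLevel k htop) S :=
  flagNum_image_eq (OrderEmbedding.subtype _) shiftAbove_injective
    (fun x : (P.deleteLevel k htop).carrier => (shiftAbove_unshiftAbove x.2).symm)
    fun y hy => by
      obtain ⟨i, -, hi⟩ := mem_image.1 hy
      exact ⟨⟨y, hi ▸ shiftAbove_ne⟩, rfl⟩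

end deleteLevel

variable (P) in
/-- `(u, true)`, for `u` of rank `k`, is the new element attached to `u`. -/
abbrev InsertCarrier (k : ℕ) : Type :=
  {p : P.carrier ×ₗ Bool // (ofLex p).2 = false ∨ P.rank (ofLex p).1 = k}

namespace InsertCarrier

variable {k : ℕ}

variable (P) in
def pair (x : P.carrier) (b : Bool) (h : b = false ∨ P.rank x = k) : P.InsertCarrier k :=
  ⟨toLex (x, b), h⟩

theorem lt_iff {p q : P.InsertCarrier k} :
    p < q ↔ (ofLex p.1).1 < (ofLex q.1).1 ∨
      (ofLex p.1).1 = (ofLex q.1).1 ∧ (ofLex p.1).2 < (ofLex q.1).2 :=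
  Subtype.coe_lt_coe.symm.trans Prod.Lex.lt_iff

theorem le_iff {p q : P.InsertCarrier k} :
    p ≤ q ↔ (ofLex p.1).1 < (ofLex q.1).1 ∨
      (ofLex p.1).1 = (ofLex q.1).1 ∧ (ofLex p.1).2 ≤ (ofLex q.1).2 :=
  Subtype.coe_le_coe.symm.trans Prod.Lex.le_iff

def rank (p : P.InsertCarrier k) : ℕ :=
  if (ofLex p.1).2 then k + 1 else shiftAbove k (P.rank (ofLex p.1).1)

theorem rank_eq_of_covBy {p q : P.InsertCarrier k} (hpq : p ⋖ q) : rank q = rank p + 1 := by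
  have hcovBy (hlt : (ofLex p.1).1 < (ofLex q.1).1) (hq : (ofLex q.1).2 = false) :
      (ofLex p.1).1 ⋖ (ofLex q.1).1 :=
    ⟨hlt, fun z hpz hzq => hpq.2 (c := pair P z false (Or.inl rfl)) (lt_iff.2 (Or.inl hpz))
      (lt_iff.2 (Or.inl (by simpa [pair] using hzq)))⟩
  rcases lt_iff.1 hpq.lt with hlt | ⟨heq, hbc⟩
  · have hq : (ofLex q.1).2 = false := by
      by_contra hq
      exact hpq.2 (c := pair P (ofLex q.1).1 false (Or.inl rfl)) (lt_iff.2 (Or.inl hlt))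
        (lt_iff.2 (Or.inr ⟨rfl, by simpa [pair, Bool.lt_iff] using hq⟩))
    have hrank := P.rank_covBy _ _ (hcovBy hlt hq)
    cases hp : (ofLex p.1).2
    · have hpk : P.rank (ofLex p.1).1 ≠ k := fun hpk =>
        hpq.2 (c := pair P (ofLex p.1).1 true (Or.inr hpk))
          (lt_iff.2 (Or.inr ⟨rfl, by simp [pair, hp]⟩)) (lt_iff.2 (Or.inl hlt))
      simp [rank, hp, hq, hrank, shiftAbove_add_one hpk]
    · have hpk : P.rank (ofLex p.1).1 = k := p.2.resolve_left (by simp [hp])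
      simp [rank, hp, hq, hrank, hpk, shiftAbove]
  · obtain ⟨hp, hq⟩ : (ofLex p.1).2 = false ∧ (ofLex q.1).2 = true := by
      revert hbc
      cases (ofLex p.1).2 <;> cases (ofLex q.1).2 <;> simp
    have hqk : P.rank (ofLex q.1).1 = k := q.2.resolve_left (by simp [hq])
    simp [rank, hp, hq, heq, hqk, shiftAbove]

end InsertCarrier

open InsertCarrier in
/-- `P` with a new level inserted above rank `k`: each `u` of rank `k` gets a new element
covering it and lying below every `y > u` (the lexicographic order). -/
noncomputable def insertLevel (k : ℕ) (hk : k < P.rank P.top) : GradedPoset where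
  carrier := P.InsertCarrier k
  fintypeCarrier := Fintype.ofFinite _
  bot := pair P P.bot false (Or.inl rfl)
  top := pair P P.top false (Or.inl rfl)
  bot_le p := le_iff.2 <| (P.bot_le _).lt_or_eq.imp id fun h => ⟨h, Bool.false_le _⟩
  le_top p := by
    refine le_iff.2 <| (P.le_top _).lt_or_eq.imp id fun h => ⟨h, ?_⟩
    rcases p.2 with hp | hp
    · exact hp.le
    · exact absurd ((congrArg P.rank h).symm.trans hp) hk.ne'
  rank := InsertCarrier.rank
  rank_bot := by simp [InsertCarrier.rank, pair, P.rank_bot, shiftAbove]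
  rank_covBy _ _ := rank_eq_of_covBy

section insertLevel

variable {k : ℕ} {hk : k < P.rank P.top}

open InsertCarrier

theorem rank_insertLevel_top :
    (P.insertLevel k hk).rank (P.insertLevel k hk).top = P.rank P.top + 1 := by
  change (if (false : Bool) then k + 1 else shiftAbove k (P.rank P.top)) = _
  simp [shiftAbove, hk.not_ge]

theorem flagNum_insertLevel (S : Finset ℕ) :
    flagNum (P.insertLevel k hk) (S.image (shiftAbove k)) = flagNum P S := by
  refine flagNum_image_eq (Q := P.insertLevel k hk)
    (OrderEmbedding.ofMapLEIff (fun x => pair P x false (Or.inl rfl)) fun x y => ?_)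
    shiftAbove_injective (fun x => rfl) fun y hy => ?_
  · refine (le_iff (p := pair P x false _) (q := pair P y false _)).trans ?_
    simp [pair, le_iff_lt_or_eq]
  · obtain ⟨i, -, hi⟩ := mem_image.1 hy
    have hy : (ofLex y.1).2 = false := by
      by_contra h
      have : (P.insertLevel k hk).rank y = k + 1 := if_pos (Bool.not_eq_false _ ▸ h)
      exact shiftAbove_ne (hi.trans this)
    exact ⟨(ofLex y.1).1, Subtype.ext (ofLex.injective (Prod.ext rfl hy.symm))⟩

end insertLevel

theorem exists_flagNum_eq_two_pow_card_inter (r : ℕ) {S : Finset ℕ} (hS : S ⊆ Icc 1 r) :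
    ∃ P : GradedPoset, P.rank P.top = r + 1 ∧ ∀ T ⊆ Icc 1 r, flagNum P T = 2 ^ #(T ∩ S) := by
  induction S using Finset.induction_on with
  | empty =>
    refine ⟨chain (r + 1), rfl, fun T hT => ?_⟩
    rw [inter_empty, card_empty, pow_zero]
    exact flagNum_chain fun t ht => by have := mem_Icc.1 (hT ht); omega
  | insert t S htS ih =>
    obtain ⟨P, hP, hflag⟩ := ih ((subset_insert t S).trans hS)
    have ht := mem_Icc.1 (hS (mem_insert_self t S))
    refine ⟨P.inflate t 1 (by omega) (by omega), hP, fun T hT => ?_⟩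
    by_cases htT : t ∈ T
    · rw [flagNum_inflate_of_mem htT, hflag T hT, inter_insert_of_mem htT,
        card_insert_of_notMem fun h => htS (mem_inter.1 h).2, pow_succ, mul_comm]
    · rw [flagNum_inflate_of_notMem htT, hflag T hT, inter_insert_of_notMem htT]

end GradedPoset

open GradedPoset

noncomputable def flagPairing (r : ℕ) (a : Finset ℕ → ℝ) (P : GradedPoset) : ℝ :=
  ∑ S ∈ (Icc 1 r).powerset, a S * flagNum P S

theorem mem_coneK_add_one_iff {r : ℕ} {a : Finset ℕ → ℝ} :
    a ∈ coneK (r + 1) ↔ (∀ S, ¬S ⊆ Icc 1 r → a S = 0) ∧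
      ∀ P : GradedPoset, P.rank P.top = r + 1 → 0 ≤ flagPairing r a P :=
  Iff.rfl

theorem eq_zero_of_forall_flagPairing_eq_zero {r : ℕ} {z : Finset ℕ → ℝ}
    (h : ∀ P : GradedPoset, P.rank P.top = r + 1 → flagPairing r z P = 0) :
    ∀ T ⊆ Icc 1 r, z T = 0 := by
  refine eq_zero_of_forall_sum_mul_two_pow_card_inter_eq_zero fun S hS => ?_
  obtain ⟨P, hP, hflag⟩ := exists_flagNum_eq_two_pow_card_inter r hS
  rw [← h P hP, flagPairing]
  refine sum_congr rfl fun T hT => ?_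
  rw [hflag T (mem_powerset.1 hT)]
  push_cast
  rfl

theorem flagPairing_inflate (r : ℕ) (a : Finset ℕ → ℝ) (P : GradedPoset) {t : ℕ} (m : ℕ)
    (h0 : t ≠ 0) (htop : P.rank P.top ≠ t) :
    flagPairing r a (P.inflate t m h0 htop) =
      flagPairing r a P + m * flagPairing r (fun T => if t ∈ T then a T else 0) P := by
  rw [flagPairing, flagPairing, flagPairing, mul_sum, ← sum_add_distrib]
  refine sum_congr rfl fun T _ => ?_
  by_cases htT : t ∈ T
  · rw [flagNum_inflate_of_mem htT, if_pos htT]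
    push_cast
    ring
  · rw [flagNum_inflate_of_notMem htT, if_neg htT]
    ring

theorem flagPairing_restrict_nonneg {r t : ℕ} (ht : t ∈ Icc 1 r) {a : Finset ℕ → ℝ}
    (ha : ∀ P : GradedPoset, P.rank P.top = r + 1 → 0 ≤ flagPairing r a P)
    {P : GradedPoset} (hP : P.rank P.top = r + 1) :
    0 ≤ flagPairing r (fun T => if t ∈ T then a T else 0) P := by
  have ht := mem_Icc.1 ht
  set B := flagPairing r (fun T => if t ∈ T then a T else 0) P
  have hm (m : ℕ) : 0 ≤ flagPairing r a P + m * B := by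
    rw [← flagPairing_inflate r a P m (by omega) (by omega)]
    exact ha _ hP
  by_contra! hB
  obtain ⟨m, hm'⟩ := exists_nat_gt (flagPairing r a P / -B)
  rw [div_lt_iff₀ (neg_pos.2 hB)] at hm'
  linarith [hm m]

section Lift

variable {n k : ℕ}

theorem image_shiftAbove_subset_Icc {S : Finset ℕ} (hS : S ⊆ Icc 1 n) :
    S.image (shiftAbove k) ⊆ Icc 1 (n + 1) := by
  intro j hj
  obtain ⟨i, hi, rfl⟩ := mem_image.1 hj
  have := mem_Icc.1 (hS hi)
  simp only [shiftAbove, mem_Icc]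
  split_ifs <;> omega

theorem image_unshiftAbove_subset_Icc (hkn : k ≤ n) {T : Finset ℕ} (hT : T ⊆ Icc 1 (n + 1))
    (hkT : k + 1 ∉ T) : T.image (unshiftAbove k) ⊆ Icc 1 n := by
  intro j hj
  obtain ⟨i, hi, rfl⟩ := mem_image.1 hj
  have := mem_Icc.1 (hT hi)
  have : i ≠ k + 1 := fun h => hkT (h ▸ hi)
  simp only [unshiftAbove, mem_Icc]
  split_ifs <;> omega

theorem image_unshiftAbove_image_shiftAbove (S : Finset ℕ) :
    (S.image (shiftAbove k)).image (unshiftAbove k) = S := by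
  simp [image_image, Function.comp_def, unshiftAbove_shiftAbove]

theorem image_shiftAbove_image_unshiftAbove {T : Finset ℕ} (hkT : k + 1 ∉ T) :
    (T.image (unshiftAbove k)).image (shiftAbove k) = T := by
  rw [image_image]
  exact (image_congr fun i hi => shiftAbove_unshiftAbove fun h => hkT (h ▸ hi)).trans image_id

theorem lift_of_subset (a : Finset ℕ → ℝ) {T : Finset ℕ} (hT : T ⊆ Icc 1 (n + 1))
    (hkT : k + 1 ∉ T) : lift n k a T = a (T.image (unshiftAbove k)) :=
  if_pos ⟨hT, hkT⟩

theorem lift_of_mem (a : Finset ℕ → ℝ) {T : Finset ℕ} (hkT : k + 1 ∈ T) : lift n k a T = 0 :=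
  if_neg fun h => h.2 hkT

theorem lift_image_shiftAbove (a : Finset ℕ → ℝ) {S : Finset ℕ} (hS : S ⊆ Icc 1 n) :
    lift n k a (S.image (shiftAbove k)) = a S := by
  rw [lift_of_subset a (image_shiftAbove_subset_Icc hS)
    fun h => shiftAbove_ne (mem_image.1 h).choose_spec.2, image_unshiftAbove_image_shiftAbove]

theorem sum_lift_mul (hkn : k ≤ n) (a g : Finset ℕ → ℝ) :
    ∑ T ∈ (Icc 1 (n + 1)).powerset, lift n k a T * g T =
      ∑ S ∈ (Icc 1 n).powerset, a S * g (S.image (shiftAbove k)) := by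
  have hinj : Set.InjOn (image (shiftAbove k)) ↑(Icc 1 n).powerset :=
    (image_injective shiftAbove_injective).injOn
  calc ∑ T ∈ (Icc 1 (n + 1)).powerset, lift n k a T * g T
      = ∑ T ∈ (Icc 1 n).powerset.image (image (shiftAbove k)), lift n k a T * g T := by
        refine (sum_subset (fun T hT => ?_) fun T hT hT' => ?_).symm
        · obtain ⟨S, hS, rfl⟩ := mem_image.1 hT
          exact mem_powerset.2 (image_shiftAbove_subset_Icc (mem_powerset.1 hS))
        · by_cases hkT : k + 1 ∈ T
          · rw [lift_of_mem a hkT, zero_mul]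
          · refine absurd (mem_image.2 ⟨T.image (unshiftAbove k), ?_, ?_⟩) hT'
            · exact mem_powerset.2 (image_unshiftAbove_subset_Icc hkn (mem_powerset.1 hT) hkT)
            · exact image_shiftAbove_image_unshiftAbove hkT
    _ = ∑ S ∈ (Icc 1 n).powerset, a S * g (S.image (shiftAbove k)) := by
        rw [sum_image hinj]
        exact sum_congr rfl fun S hS => by rw [lift_image_shiftAbove a (mem_powerset.1 hS)]

theorem lift_mem_coneK (hkn : k ≤ n) {a : Finset ℕ → ℝ} (ha : a ∈ coneK (n + 1)) :
    lift n k a ∈ coneK (n + 2) := by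
  refine mem_coneK_add_one_iff.2 ⟨fun T hT => if_neg fun h => hT h.1, fun P hP => ?_⟩
  have htop : P.rank P.top ≠ k + 1 := by omega
  have hrank : (P.deleteLevel k htop).rank (P.deleteLevel k htop).top = n + 1 := by
    rw [rank_deleteLevel_top (by omega)]
    omega
  rw [flagPairing, sum_lift_mul hkn]
  refine ((mem_coneK_add_one_iff.1 ha).2 _ hrank).trans_eq (sum_congr rfl fun S _ => ?_)
  rw [flagNum_deleteLevel]

theorem mem_coneK_of_lift_mem (hkn : k ≤ n) {a : Finset ℕ → ℝ}
    (ha : ∀ S, ¬S ⊆ Icc 1 n → a S = 0) (h : lift n k a ∈ coneK (n + 2)) :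
    a ∈ coneK (n + 1) := by
  refine mem_coneK_add_one_iff.2 ⟨ha, fun Q hQ => ?_⟩
  have hk : k < Q.rank Q.top := by omega
  have := (mem_coneK_add_one_iff.1 h).2 (Q.insertLevel k hk) (by rw [rank_insertLevel_top, hQ])
  rw [flagPairing, sum_lift_mul hkn] at this
  refine this.trans_eq (sum_congr rfl fun S _ => ?_)
  rw [flagNum_insertLevel]

theorem mem_image_lift_coneK_iff (hkn : k ≤ n) {x : Finset ℕ → ℝ} :
    x ∈ lift n k '' coneK (n + 1) ↔ x ∈ coneK (n + 2) ∧ ∀ T, k + 1 ∈ T → x T = 0 := by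
  classical
  refine ⟨fun ⟨a, ha, hax⟩ => hax ▸ ⟨lift_mem_coneK hkn ha, fun T hT => lift_of_mem a hT⟩,
    fun ⟨hx, hxk⟩ => ?_⟩
  set a : Finset ℕ → ℝ := fun S => if S ⊆ Icc 1 n then x (S.image (shiftAbove k)) else 0
  have hlift : lift n k a = x := by
    funext T
    by_cases hT : T ⊆ Icc 1 (n + 1) ∧ k + 1 ∉ T
    · rw [lift_of_subset a hT.1 hT.2]
      simp only [a, if_pos (image_unshiftAbove_subset_Icc hkn hT.1 hT.2),
        image_shiftAbove_image_unshiftAbove hT.2]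
    · rw [lift, if_neg hT]
      rcases not_and_or.1 hT with hT | hT
      · exact ((mem_coneK_add_one_iff.1 hx).1 T hT).symm
      · exact (hxk T (not_not.1 hT)).symm
  exact ⟨a, mem_coneK_of_lift_mem hkn (fun S hS => if_neg hS) (hlift ▸ hx), hlift⟩

theorem eq_zero_of_add_mem_image_lift_coneK (hkn : k ≤ n) {x y : Finset ℕ → ℝ}
    (hx : x ∈ coneK (n + 2)) (hy : y ∈ coneK (n + 2)) (hxy : x + y ∈ lift n k '' coneK (n + 1))
    {T : Finset ℕ} (hkT : k + 1 ∈ T) : x T = 0 := by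
  have hsum (T : Finset ℕ) (hT : k + 1 ∈ T) : x T + y T = 0 :=
    ((mem_image_lift_coneK_iff hkn).1 hxy).2 T hT
  have hk : k + 1 ∈ Icc 1 (n + 1) := mem_Icc.2 ⟨by omega, by omega⟩
  set restrict : (Finset ℕ → ℝ) → Finset ℕ → ℝ := fun w T => if k + 1 ∈ T then w T else 0
  have hzero (P : GradedPoset) (hP : P.rank P.top = n + 2) :
      flagPairing (n + 1) (restrict x) P = 0 := by
    have hxP := flagPairing_restrict_nonneg hk (mem_coneK_add_one_iff.1 hx).2 hP
    have hyP := flagPairing_restrict_nonneg hk (mem_coneK_add_one_iff.1 hy).2 hP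
    have : flagPairing (n + 1) (restrict x) P + flagPairing (n + 1) (restrict y) P = 0 := by
      rw [flagPairing, flagPairing, ← sum_add_distrib]
      refine sum_eq_zero fun T _ => ?_
      simp only [restrict]
      split_ifs with h
      · rw [← add_mul, hsum T h, zero_mul]
      · ring
    linarith
  by_cases hT : T ⊆ Icc 1 (n + 1)
  · simpa [restrict, hkT] using eq_zero_of_forall_flagPairing_eq_zero hzero T hT
  · exact (mem_coneK_add_one_iff.1 hx).1 T hT

theorem mem_image_lift_coneK_of_add_mem (hkn : k ≤ n) {x y : Finset ℕ → ℝ}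
    (hx : x ∈ coneK (n + 2)) (hy : y ∈ coneK (n + 2))
    (hxy : x + y ∈ lift n k '' coneK (n + 1)) : x ∈ lift n k '' coneK (n + 1) :=
  (mem_image_lift_coneK_iff hkn).2
    ⟨hx, fun _ hkT => eq_zero_of_add_mem_image_lift_coneK hkn hx hy hxy hkT⟩

variable (n k) in
noncomputable def liftₗ : (Finset ℕ → ℝ) →ₗ[ℝ] Finset ℕ → ℝ where
  toFun := lift n k
  map_add' a b := by
    ext T
    simp only [lift, Pi.add_apply]
    split_ifs <;> simp
  map_smul' c a := by
    ext T
    simp only [lift, Pi.smul_apply, smul_eq_mul, RingHom.id_apply]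
    split_ifs <;> simp

def supportedOn (M : Finset ℕ) : Submodule ℝ (Finset ℕ → ℝ) :=
  Submodule.pi {S | ¬S ⊆ M} fun _ => ⊥

theorem mem_supportedOn {M : Finset ℕ} {a : Finset ℕ → ℝ} :
    a ∈ supportedOn M ↔ ∀ S, ¬S ⊆ M → a S = 0 := by
  simp [supportedOn]

theorem lift_injOn : Set.InjOn (lift n k) (supportedOn (Icc 1 n)) := by
  intro a ha b hb h
  rw [SetLike.mem_coe, mem_supportedOn] at ha hb
  funext S
  by_cases hS : S ⊆ Icc 1 n
  · rw [← lift_image_shiftAbove (k := k) a hS, ← lift_image_shiftAbove (k := k) b hS, h]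
  · exact (ha S hS).trans (hb S hS).symm

end Lift

theorem isExtremeRay_iff_of_face {K C : Set (Finset ℕ → ℝ)} {D : Submodule ℝ (Finset ℕ → ℝ)}
    (L : (Finset ℕ → ℝ) →ₗ[ℝ] Finset ℕ → ℝ) (hinj : Set.InjOn L D) (hKD : K ⊆ D)
    (hmem : ∀ a ∈ D, a ∈ K ↔ L a ∈ C)
    (hface : ∀ x y, x ∈ C → y ∈ C → x + y ∈ L '' K → x ∈ L '' K)
    {a : Finset ℕ → ℝ} (ha : a ∈ D) : IsExtremeRay K a ↔ IsExtremeRay C (L a) := by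
  constructor
  · rintro ⟨haK, ha0, hext⟩
    refine ⟨(hmem a ha).1 haK, fun h => ha0 (hinj ha D.zero_mem (h.trans L.map_zero.symm)),
      fun G H hG hH hGH => ?_⟩
    have hGH' : G + H ∈ L '' K := ⟨a, haK, hGH⟩
    obtain ⟨g, hg, rfl⟩ := hface G H hG hH hGH'
    obtain ⟨h, hh, rfl⟩ := hface H (L g) hH hG (add_comm (L g) H ▸ hGH')
    obtain ⟨⟨c, hc, rfl⟩, ⟨d, hd, rfl⟩⟩ := hext g h hg hh <|
      hinj ha (D.add_mem (hKD hg) (hKD hh)) (hGH.trans (L.map_add g h).symm)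
    exact ⟨⟨c, hc, L.map_smul c a⟩, ⟨d, hd, L.map_smul d a⟩⟩
  · rintro ⟨hLa, hLa0, hext⟩
    refine ⟨(hmem a ha).2 hLa, fun h => hLa0 (h ▸ L.map_zero), fun g h hg hh hagh => ?_⟩
    obtain ⟨⟨c, hc, hgc⟩, ⟨d, hd, hhd⟩⟩ := hext (L g) (L h) ((hmem g (hKD hg)).1 hg)
      ((hmem h (hKD hh)).1 hh) (by rw [hagh, map_add])
    refine ⟨⟨c, hc, hinj (hKD hg) (D.smul_mem c ha) ?_⟩,
      ⟨d, hd, hinj (hKD hh) (D.smul_mem d ha) ?_⟩⟩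
    · rw [hgc, map_smul]
    · rw [hhd, map_smul]

theorem stmt_17_general (n k : ℕ) (hkn : k ≤ n) :
    (∀ a ∈ coneK (n + 1), lift n k a ∈ coneK (n + 2)) ∧
    (∀ x y : Finset ℕ → ℝ, x ∈ coneK (n + 2) → y ∈ coneK (n + 2) →
        x + y ∈ lift n k '' coneK (n + 1) →
        x ∈ lift n k '' coneK (n + 1) ∧ y ∈ lift n k '' coneK (n + 1)) ∧
    ∀ a : Finset ℕ → ℝ, (∀ S : Finset ℕ, ¬ S ⊆ Finset.Icc 1 n → a S = 0) →
      ((a ∈ coneK (n + 1) ↔ lift n k a ∈ coneK (n + 2)) ∧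
        (IsExtremeRay (coneK (n + 1)) a ↔ IsExtremeRay (coneK (n + 2)) (lift n k a))) := by
  have hface (x y : Finset ℕ → ℝ) (hx : x ∈ coneK (n + 2)) (hy : y ∈ coneK (n + 2))
      (hxy : x + y ∈ lift n k '' coneK (n + 1)) : x ∈ lift n k '' coneK (n + 1) :=
    mem_image_lift_coneK_of_add_mem hkn hx hy hxy
  have hmem (a : Finset ℕ → ℝ) (ha : ∀ S, ¬S ⊆ Icc 1 n → a S = 0) :
      a ∈ coneK (n + 1) ↔ lift n k a ∈ coneK (n + 2) :=
    ⟨lift_mem_coneK hkn, mem_coneK_of_lift_mem hkn ha⟩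
  refine ⟨fun a => lift_mem_coneK hkn, fun x y hx hy hxy =>
    ⟨hface x y hx hy hxy, hface y x hy hx (add_comm x y ▸ hxy)⟩, fun a ha => ⟨hmem a ha, ?_⟩⟩
  exact isExtremeRay_iff_of_face (liftₗ n k) lift_injOn
    (fun b hb => mem_supportedOn.2 (mem_coneK_add_one_iff.1 hb).1)
    (fun b hb => hmem b (mem_supportedOn.1 hb)) hface (mem_supportedOn.2 ha)

theorem stmt_17 (n k : ℕ) (hn : 1 ≤ n) (hk1 : 1 ≤ k) (hkn : k ≤ n) :
    (∀ a ∈ coneK (n + 1), lift n k a ∈ coneK (n + 2)) ∧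
    (∀ x y : Finset ℕ → ℝ, x ∈ coneK (n + 2) → y ∈ coneK (n + 2) →
        x + y ∈ lift n k '' coneK (n + 1) →
        x ∈ lift n k '' coneK (n + 1) ∧ y ∈ lift n k '' coneK (n + 1)) ∧
    ∀ a : Finset ℕ → ℝ, (∀ S : Finset ℕ, ¬ S ⊆ Finset.Icc 1 n → a S = 0) →
      ((a ∈ coneK (n + 1) ↔ lift n k a ∈ coneK (n + 2)) ∧
        (IsExtremeRay (coneK (n + 1)) a ↔ IsExtremeRay (coneK (n + 2)) (lift n k a))) :=
  stmt_17_general n k hkn
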